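/- Conservativity over intuitionistic logic: for any set Φ∪{ψ} of standard formulas, Φ entails ψ in InqI (every team of every intuitionistic Kripke model supporting all formulas in Φ supports ψ) if and only if Φ entails ψ in intuitionistic Kripke semantics (every world of every intuitionistic Kripke model at which all formulas in Φ are true makes ψ true). -/

import Mathlib

/-- Formulas of the language L: atoms, ⊥, ∧, ∨, →, and inquisitive disjunction ⩾. -/
inductive Formula (P : Type) : Type
  | atom : P → Formula P
  | bot  : Formula P
  | and  : Formula P → Formula P → Formula P
  | or   : Formula P → Formula P → Formula P
  | impl : Formula P → Formula P → Formula P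
  | iorr : Formula P → Formula P → Formula P

namespace Formula

/-- Negation ¬φ := φ → ⊥. -/
def neg {P : Type} (φ : Formula P) : Formula P := Formula.impl φ Formula.bot

/-- Polar question ?φ := φ ⩾ ¬φ. -/
def question {P : Type} (φ : Formula P) : Formula P := Formula.iorr φ φ.neg

/-- A standard formula contains no occurrence of inquisitive disjunction ⩾. -/
def standard {P : Type} : Formula P → Prop
  | atom _ => True
  | bot => True
  | and φ ψ => φ.standard ∧ ψ.standard
  | or φ ψ => φ.standard ∧ ψ.standard
  | impl φ ψ => φ.standard ∧ ψ.standard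
  | iorr _ _ => False

end Formula

/-- An intuitionistic Kripke model: a partially ordered set of worlds with a
persistent valuation. -/
structure KripkeModel (P : Type) where
  W : Type
  R : W → W → Prop
  refl : ∀ w, R w w
  antisymm : ∀ w v, R w v → R v w → w = v
  trans : ∀ w v u, R w v → R v u → R w u
  V : W → P → Prop
  persistent : ∀ w v p, R w v → V w p → V v p

/-- R[t], the up-set generated by a team t. -/
def KripkeModel.upset {P : Type} (M : KripkeModel P) (t : Set M.W) : Set M.W :=
  {v | ∃ w ∈ t, M.R w v}

/-- The support relation M,t ⊨ φ between teams and formulas. -/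
def support {P : Type} (M : KripkeModel P) : Formula P → Set M.W → Prop
  | .atom p, t => ∀ w ∈ t, M.V w p
  | .bot, t => t = ∅
  | .and φ ψ, t => support M φ t ∧ support M ψ t
  | .or φ ψ, t => ∃ t₁ t₂, t = t₁ ∪ t₂ ∧ support M φ t₁ ∧ support M ψ t₂
  | .impl φ ψ, t => ∀ t', t' ⊆ M.upset t → support M φ t' → support M ψ t'
  | .iorr φ ψ, t => support M φ t ∨ support M ψ t

/-- Truth at a world: M,w ⊨ φ iff M,{w} ⊨ φ. -/
def truth {P : Type} (M : KripkeModel P) (w : M.W) (φ : Formula P) : Prop :=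
  support M φ {w}

/-- A formula is truth-conditional if support at a team amounts to truth at each world. -/
def truthConditional {P : Type} (φ : Formula P) : Prop :=
  ∀ (M : KripkeModel P) (t : Set M.W), support M φ t ↔ ∀ w ∈ t, truth M w φ

/-- The partial truth-value function: `tvalIs M w φ b` says T(w,φ) is defined with value b
(b = true for value 1, i.e. M,w ⊨ φ; b = false for value 0, i.e. M,w ⊨ ¬φ). -/
def tvalIs {P : Type} (M : KripkeModel P) (w : M.W) (φ : Formula P) : Bool → Prop
  | true => truth M w φ
  | false => truth M w φ.neg

/-! Standard formulas are truth-conditional: support at a team amounts to truth at each of its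
worlds. This goes by induction on the formula, using that support is downward closed. InqI
entailment between truth-conditional formulas is therefore decided world by world, which is
entailment in intuitionistic Kripke semantics. -/

theorem KripkeModel.upset_mono {P : Type} (M : KripkeModel P) {s t : Set M.W} (hst : s ⊆ t) :
    M.upset s ⊆ M.upset t :=
  fun _ ⟨w, hw, hwv⟩ => ⟨w, hst hw, hwv⟩

section Support

variable {P : Type} {M : KripkeModel P}

theorem support_of_subset {φ : Formula P} {s t : Set M.W} (hst : s ⊆ t) (h : support M φ t) :
    support M φ s := by
  induction φ generalizing s t with
  | atom p => exact fun w hw => h w (hst hw)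
  | bot => exact Set.subset_eq_empty hst h
  | and φ ψ ihφ ihψ => exact ⟨ihφ hst h.1, ihψ hst h.2⟩
  | or φ ψ ihφ ihψ =>
      obtain ⟨t₁, t₂, rfl, h₁, h₂⟩ := h
      refine ⟨s ∩ t₁, s ∩ t₂, ?_, ihφ Set.inter_subset_right h₁, ihψ Set.inter_subset_right h₂⟩
      rw [← Set.inter_union_distrib_left, Set.inter_eq_left.mpr hst]
  | impl φ ψ _ _ => exact fun t' ht' => h t' (ht'.trans (M.upset_mono hst))
  | iorr φ ψ ihφ ihψ => exact h.imp (ihφ hst) (ihψ hst)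

theorem truth_of_support {φ : Formula P} {t : Set M.W} (h : support M φ t) {w : M.W}
    (hw : w ∈ t) : truth M w φ :=
  support_of_subset (Set.singleton_subset_iff.mpr hw) h

end Support

namespace truthConditional

variable {P : Type}

theorem of_forall_truth {φ : Formula P}
    (h : ∀ (M : KripkeModel P) (t : Set M.W), (∀ w ∈ t, truth M w φ) → support M φ t) :
    truthConditional φ :=
  fun M _ => ⟨fun ht _ hw => truth_of_support ht hw, h M _⟩

theorem atom (p : P) : truthConditional (Formula.atom p) :=
  of_forall_truth fun _ _ h w hw => h w hw w rfl

theorem bot : truthConditional (Formula.bot : Formula P) :=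
  of_forall_truth fun _ _ h =>
    Set.eq_empty_of_forall_notMem fun w hw => Set.singleton_ne_empty w (h w hw)

theorem and {φ ψ : Formula P} (hφ : truthConditional φ) (hψ : truthConditional ψ) :
    truthConditional (φ.and ψ) :=
  of_forall_truth fun M t h =>
    ⟨(hφ M t).mpr fun w hw => (h w hw).1, (hψ M t).mpr fun w hw => (h w hw).2⟩

theorem or {φ ψ : Formula P} (hφ : truthConditional φ) (hψ : truthConditional ψ) :
    truthConditional (φ.or ψ) := by
  refine of_forall_truth fun M t h => ⟨{w ∈ t | truth M w φ}, {w ∈ t | ¬ truth M w φ}, ?_, ?_, ?_⟩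
  · ext w
    simp only [Set.mem_union, Set.mem_sep_iff]
    tauto
  · exact (hφ M _).mpr fun w hw => hw.2
  · refine (hψ M _).mpr fun w ⟨hwt, hwφ⟩ => ?_
    obtain ⟨t₁, t₂, hsplit, h₁, h₂⟩ := h w hwt
    have hw : w ∈ t₁ ∪ t₂ := hsplit ▸ Set.mem_singleton w
    rcases hw with hw₁ | hw₂
    · exact absurd (truth_of_support h₁ hw₁) hwφ
    · exact truth_of_support h₂ hw₂

theorem impl (φ : Formula P) {ψ : Formula P} (hψ : truthConditional ψ) :
    truthConditional (φ.impl ψ) := by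
  refine of_forall_truth fun M t h t' ht' hφ' => (hψ M t').mpr fun v hv => ?_
  obtain ⟨w, hw, hwv⟩ := ht' hv
  have hv_above_w : {v} ⊆ M.upset {w} := Set.singleton_subset_iff.mpr ⟨w, rfl, hwv⟩
  exact h w hw {v} hv_above_w (truth_of_support hφ' hv)

end truthConditional

theorem Formula.standard.truthConditional {P : Type} {φ : Formula P} (hφ : φ.standard) :
    truthConditional φ := by
  induction φ with
  | atom p => exact .atom p
  | bot => exact .bot
  | and φ ψ ihφ ihψ => exact .and (ihφ hφ.1) (ihψ hφ.2)
  | or φ ψ ihφ ihψ => exact .or (ihφ hφ.1) (ihψ hφ.2)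
  | impl φ ψ _ ihψ => exact .impl φ (ihψ hφ.2)
  | iorr _ _ _ _ => exact hφ.elim

/-- conservativity over intuitionistic logic: for standard formulas,
InqI entailment coincides with entailment in intuitionistic Kripke semantics. -/
theorem conservativity_over_IPL {P : Type} (Φ : Set (Formula P)) (ψ : Formula P)
    (hΦ : ∀ φ ∈ Φ, φ.standard) (hψ : ψ.standard) :
    (∀ (M : KripkeModel P) (t : Set M.W),
        (∀ φ ∈ Φ, support M φ t) → support M ψ t) ↔
    (∀ (M : KripkeModel P) (w : M.W),
        (∀ φ ∈ Φ, truth M w φ) → truth M w ψ) := by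
  refine ⟨fun h M w => h M {w}, fun h M t hΦt => ?_⟩
  refine (hψ.truthConditional M t).mpr fun w hw => h M w fun φ hφ => ?_
  exact ((hΦ φ hφ).truthConditional M t).mp (hΦt φ hφ) w hw
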